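/- Radial alignment constraint elimination: let X̃ ∈ ℝ³, Λ ∈ SO(3), c = (c_x, c_y) ∈ ℝ², f, z ∈ ℝ with z ≠ 0, and u, v ∈ ℝ. Suppose z·(u − c_x, v − c_y, 1)ᵀ = diag(f, f, 1) Λᵀ X̃. Write ΛᵀX̃ = (X, Y, Z)ᵀ with the second row γ₂·X̃ := γ₂₁X̃₁+γ₂₂X̃₂+γ₂₃X̃₃ ≠ 0. Then (u − c_x)·(γ₂₁X̃₁+γ₂₂X̃₂+γ₂₃X̃₃) = (v − c_y)·(γ₁₁X̃₁+γ₁₂X̃₂+γ₁₃X̃₃), where γ_{ij} is the (i,j) entry of Λᵀ. -/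

import Mathlib

open Matrix

theorem mul_eq_mul_of_smul_eq_diagonal_mulVec {R : Type*} [CommRing R] [IsDomain R]
    {a b f z : R} {w : Fin 3 → R} (hz : z ≠ 0)
    (h : z • ![a, b, 1] = diagonal ![f, f, 1] *ᵥ w) :
    a * w 1 = b * w 0 := by
  have ha : z * a = f * w 0 := by simpa [mulVec_diagonal] using congrFun h 0
  have hb : z * b = f * w 1 := by simpa [mulVec_diagonal] using congrFun h 1
  refine mul_left_cancel₀ hz ?_
  linear_combination w 1 * ha - w 0 * hb

theorem mulVec_fin_three_apply {R : Type*} [NonUnitalNonAssocSemiring R]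
    (M : Matrix (Fin 3) (Fin 3) R) (x : Fin 3 → R) (i : Fin 3) :
    (M *ᵥ x) i = M i 0 * x 0 + M i 1 * x 1 + M i 2 * x 2 :=
  vec3_dotProduct _ _

theorem stmt_18_general (Xt : Fin 3 → ℝ) (Λ : Matrix (Fin 3) (Fin 3) ℝ)
    (cx cy f z u v : ℝ) (hz : z ≠ 0)
    (hproj : z • ![u - cx, v - cy, 1] =
      Matrix.diagonal ![f, f, 1] *ᵥ (Λᵀ *ᵥ Xt)) :
    (u - cx) * (Λᵀ 1 0 * Xt 0 + Λᵀ 1 1 * Xt 1 + Λᵀ 1 2 * Xt 2) =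
    (v - cy) * (Λᵀ 0 0 * Xt 0 + Λᵀ 0 1 * Xt 1 + Λᵀ 0 2 * Xt 2) := by
  simpa only [mulVec_fin_three_apply] using mul_eq_mul_of_smul_eq_diagonal_mulVec hz hproj

/-- Radial alignment constraint: eliminating the depth z and the point-wise
focal length f from the projection equation
z (u−c_x, v−c_y, 1)ᵀ = diag(f,f,1) Λᵀ X̃ yields
(u−c_x)(γ₂₁X̃₁+γ₂₂X̃₂+γ₂₃X̃₃) = (v−c_y)(γ₁₁X̃₁+γ₁₂X̃₂+γ₁₃X̃₃). -/
theorem stmt_18 (Xt : Fin 3 → ℝ) (Λ : Matrix (Fin 3) (Fin 3) ℝ)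
    (hΛ : Λ ∈ Matrix.specialOrthogonalGroup (Fin 3) ℝ)
    (cx cy f z u v : ℝ) (hz : z ≠ 0)
    (hproj : z • ![u - cx, v - cy, 1] =
      Matrix.diagonal ![f, f, 1] *ᵥ (Λᵀ *ᵥ Xt))
    (hden : Λᵀ 1 0 * Xt 0 + Λᵀ 1 1 * Xt 1 + Λᵀ 1 2 * Xt 2 ≠ 0) :
    (u - cx) * (Λᵀ 1 0 * Xt 0 + Λᵀ 1 1 * Xt 1 + Λᵀ 1 2 * Xt 2) =
    (v - cy) * (Λᵀ 0 0 * Xt 0 + Λᵀ 0 1 * Xt 1 + Λᵀ 0 2 * Xt 2) :=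
  stmt_18_general Xt Λ cx cy f z u v hz hproj
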